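/- Let f be μ-strongly convex (μ > 0) with H-Lipschitz Hessian, ∇f(x*) = 0, and suppose a Newton-type cubic-regularized step produces x^{k+1} = x^k − [M_k + (H/2)‖x^{k+1}−x^k‖ I]^{-1}∇f(x^k) where M_k := H^k + l^k I satisfies μI ⪯ ∇²f(x^k) ⪯ M_k, with l^k = (1/n)Σ_i ‖H_i^k − ∇²f_i(x^k)‖_F and all f_i having L_F-Lipschitz Hessian in Frobenius norm. Then ‖x^{k+1}−x*‖² ≤ (5H²/(4μ²))‖x^{k+1}−x*‖²‖x^k−x*‖² + (20/μ²)‖x^k−x*‖² H_err^k + (5(H²+8L_F²)/(2μ²))‖x^k−x*‖⁴, where H_err^k := (1/n)Σ_i‖H_i^k − ∇²f_i(x*)‖_F². -/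

import Mathlib

open scoped RealInnerProductSpace

attribute [local instance] Matrix.frobeniusNormedAddCommGroup Matrix.frobeniusNormedSpace

/-- A matrix viewed as a continuous linear map on Euclidean space; its operator norm
is the spectral norm of the matrix. -/
noncomputable def Matrix.toCLM' {d : ℕ} (A : Matrix (Fin d) (Fin d) ℝ) :
    EuclideanSpace ℝ (Fin d) →L[ℝ] EuclideanSpace ℝ (Fin d) :=
  LinearMap.toContinuousLinearMap (Matrix.toEuclideanLin A)

/-!
Write `e = x^k - x*`, `B = ∇²f(x^k)` and `A = M_k + (H/2)‖x^{k+1} - x^k‖ I`. The step gives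
`A (x^{k+1} - x*) = (A - B) e - (∇f(x^k) - ∇f(x*) - B e)`, and `A ⪰ μI`, so
`μ ‖x^{k+1} - x*‖ ≤ ‖A - B‖ ‖e‖ + (H/2) ‖e‖²` by the Lipschitz Taylor bound. Since
`M_k - B = (1/n) Σᵢ (Hᵢ^k - ∇²fᵢ(x^k)) + l^k I` and the spectral norm is at most the Frobenius
norm, `‖A - B‖ ≤ 2 l^k + (H/2)(‖x^{k+1} - x*‖ + ‖e‖)`, while `l^k` exceeds the average of
`‖Hᵢ^k - ∇²fᵢ(x*)‖_F` by at most `L_F ‖e‖`. Squaring with a weighted Cauchy–Schwarz inequality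
and Jensen for the average gives the claim.
-/

lemma Matrix.norm_toCLM'_apply_le_frobenius {d : ℕ} (M : Matrix (Fin d) (Fin d) ℝ)
    (v : EuclideanSpace ℝ (Fin d)) : ‖Matrix.toCLM' M v‖ ≤ ‖M‖ * ‖v‖ := by
  have hcol (w : EuclideanSpace ℝ (Fin d)) : ‖Matrix.replicateCol (Fin 1) w.ofLp‖ = ‖w‖ :=
    Matrix.frobenius_norm_replicateCol _
  have := Matrix.frobenius_norm_mul M (Matrix.replicateCol (Fin 1) v.ofLp)
  rwa [← Matrix.replicateCol_mulVec, hcol, hcol] at this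

lemma Matrix.toCLM'_sub_apply {d : ℕ} (M M' : Matrix (Fin d) (Fin d) ℝ)
    (v : EuclideanSpace ℝ (Fin d)) :
    Matrix.toCLM' (M - M') v = Matrix.toCLM' M v - Matrix.toCLM' M' v :=
  congrArg (· v) (map_sub (Matrix.toEuclideanCLM (n := Fin d) (𝕜 := ℝ)) M M')

lemma Matrix.toCLM'_add_smul_one_apply {d : ℕ} (M : Matrix (Fin d) (Fin d) ℝ) (c : ℝ)
    (v : EuclideanSpace ℝ (Fin d)) :
    Matrix.toCLM' (M + c • 1) v = Matrix.toCLM' M v + c • v := by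
  change Matrix.toEuclideanCLM (n := Fin d) (𝕜 := ℝ) (M + c • 1) v = _
  simp only [map_add, map_smul, map_one]
  rfl

lemma Matrix.le_inner_toCLM'_add_smul_one {d : ℕ} {M : Matrix (Fin d) (Fin d) ℝ} {μ c : ℝ}
    (hM : ∀ v, μ * ‖v‖ ^ 2 ≤ ⟪Matrix.toCLM' M v, v⟫) (hc : 0 ≤ c)
    (v : EuclideanSpace ℝ (Fin d)) : μ * ‖v‖ ^ 2 ≤ ⟪Matrix.toCLM' (M + c • 1) v, v⟫ := by
  rw [Matrix.toCLM'_add_smul_one_apply, inner_add_left, real_inner_smul_left,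
    real_inner_self_eq_norm_sq]
  linarith [hM v, mul_nonneg hc (sq_nonneg ‖v‖)]

lemma Matrix.norm_toCLM'_add_smul_one_apply_le {d : ℕ} (M : Matrix (Fin d) (Fin d) ℝ) {c : ℝ}
    (hc : 0 ≤ c) (v : EuclideanSpace ℝ (Fin d)) :
    ‖Matrix.toCLM' (M + c • 1) v‖ ≤ (‖M‖ + c) * ‖v‖ := by
  rw [Matrix.toCLM'_add_smul_one_apply, add_mul]
  refine norm_add_le_of_le (Matrix.norm_toCLM'_apply_le_frobenius M v) ?_
  rw [norm_smul, Real.norm_of_nonneg hc]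

lemma norm_inv_smul_sum_le {ι E : Type*} [Fintype ι] [SeminormedAddCommGroup E]
    [NormedSpace ℝ E] (n : ℕ) (a : ι → E) :
    ‖(n : ℝ)⁻¹ • ∑ i, a i‖ ≤ (n : ℝ)⁻¹ * ∑ i, ‖a i‖ := by
  rw [norm_smul, norm_inv, Real.norm_natCast]
  gcongr
  exact norm_sum_le _ _

lemma Matrix.norm_toCLM'_corrected_mean_sub_apply_le {d n : ℕ}
    (Hk G : Fin n → Matrix (Fin d) (Fin d) ℝ) {c : ℝ} (hc : 0 ≤ c)
    (v : EuclideanSpace ℝ (Fin d)) :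
    ‖Matrix.toCLM' ((n : ℝ)⁻¹ • ∑ i, Hk i + ((n : ℝ)⁻¹ * ∑ i, ‖Hk i - G i‖) • 1 + c • 1) v -
        Matrix.toCLM' ((n : ℝ)⁻¹ • ∑ i, G i) v‖ ≤
      (2 * ((n : ℝ)⁻¹ * ∑ i, ‖Hk i - G i‖) + c) * ‖v‖ := by
  set l := (n : ℝ)⁻¹ * ∑ i, ‖Hk i - G i‖
  have hsplit : (n : ℝ)⁻¹ • ∑ i, Hk i + l • 1 + c • 1 - (n : ℝ)⁻¹ • ∑ i, G i =
      (n : ℝ)⁻¹ • ∑ i, (Hk i - G i) + (l + c) • 1 := by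
    rw [Finset.sum_sub_distrib, smul_sub, add_smul]
    abel
  rw [← Matrix.toCLM'_sub_apply, hsplit]
  refine (Matrix.norm_toCLM'_add_smul_one_apply_le _ (by positivity) _).trans ?_
  have hmean := norm_inv_smul_sum_le n fun i => Hk i - G i
  exact mul_le_mul_of_nonneg_right (by linarith) (norm_nonneg _)

lemma inv_mul_sum_norm_sub_le_of_lipschitz {n : ℕ} (hn : n ≠ 0) {E F : Type*}
    [SeminormedAddCommGroup E] [SeminormedAddCommGroup F] (a : Fin n → F) {φ : Fin n → E → F}
    {L : ℝ} (hφ : ∀ i x y, ‖φ i x - φ i y‖ ≤ L * ‖x - y‖) (x y : E) :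
    (n : ℝ)⁻¹ * ∑ i, ‖a i - φ i x‖ ≤ (n : ℝ)⁻¹ * ∑ i, ‖a i - φ i y‖ + L * ‖x - y‖ := by
  have hpoint (i : Fin n) : ‖a i - φ i x‖ ≤ ‖a i - φ i y‖ + L * ‖x - y‖ := by
    have := dist_triangle_right (a i) (φ i x) (φ i y)
    rw [dist_eq_norm, dist_eq_norm, dist_eq_norm] at this
    linarith [hφ i x y]
  calc (n : ℝ)⁻¹ * ∑ i, ‖a i - φ i x‖ ≤ (n : ℝ)⁻¹ * ∑ i, (‖a i - φ i y‖ + L * ‖x - y‖) := by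
        gcongr with i; exact hpoint i
    _ = (n : ℝ)⁻¹ * ∑ i, ‖a i - φ i y‖ + L * ‖x - y‖ := by
      rw [Finset.sum_add_distrib, Finset.sum_const, Finset.card_univ, Fintype.card_fin,
        nsmul_eq_mul, mul_add, inv_mul_cancel_left₀ (Nat.cast_ne_zero.2 hn)]

lemma sq_inv_mul_sum_le_inv_mul_sum_sq {n : ℕ} (a : Fin n → ℝ) :
    ((n : ℝ)⁻¹ * ∑ i, a i) ^ 2 ≤ (n : ℝ)⁻¹ * ∑ i, a i ^ 2 := by
  simpa [inv_mul_eq_div] using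
    sum_div_card_sq_le_sum_sq_div_card (s := Finset.univ) (f := a)

theorem norm_image_sub_sub_fderiv_le_of_lipschitz {E F : Type*} [NormedAddCommGroup E]
    [NormedSpace ℝ E] [NormedAddCommGroup F] [NormedSpace ℝ F] {g : E → F} {D : E → E →L[ℝ] F}
    {H : ℝ} (hD : ∀ x, HasFDerivAt g (D x) x) (hLip : ∀ x y, ‖D x - D y‖ ≤ H * ‖x - y‖)
    (a b : E) : ‖g b - g a - D b (b - a)‖ ≤ H / 2 * ‖b - a‖ ^ 2 := by
  set e := b - a
  set c := H * ‖e‖ ^ 2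
  have hφ (t : ℝ) : HasDerivAt (fun s : ℝ => g (a + s • e) - g a - s • D b e)
      (D (a + t • e) e - D b e) t := by
    have hpath : HasDerivAt (fun s : ℝ => a + s • e) e t := by
      simpa using ((hasDerivAt_id t).smul_const e).const_add a
    exact (((hD _).comp_hasDerivAt t hpath).sub_const (g a)).sub
      (by simpa using (hasDerivAt_id t).smul_const (D b e))
  have hB (t : ℝ) : HasDerivAt (fun s : ℝ => c * (s - s ^ 2 / 2)) (c * (1 - t)) t := by
    simpa using (((hasDerivAt_id t).sub ((hasDerivAt_pow 2 t).div_const 2))).const_mul c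
  have bound : ∀ t ∈ Set.Ico (0 : ℝ) 1, ‖D (a + t • e) e - D b e‖ ≤ c * (1 - t) := by
    intro t ht
    have hdist : ‖a + t • e - b‖ = (1 - t) * ‖e‖ := by
      rw [show a + t • e - b = (t - 1) • e by simp only [e]; module, norm_smul,
        Real.norm_of_nonpos (by linarith [ht.2]), neg_sub]
    calc ‖D (a + t • e) e - D b e‖ = ‖(D (a + t • e) - D b) e‖ := rfl
      _ ≤ ‖D (a + t • e) - D b‖ * ‖e‖ := (D (a + t • e) - D b).le_opNorm e
      _ ≤ H * ((1 - t) * ‖e‖) * ‖e‖ := by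
          gcongr; exact hdist ▸ hLip _ _
      _ = c * (1 - t) := by ring
  -- Fencing: the remainder along the segment stays below `c (t - t² / 2)`; take `t = 1`.
  have := image_norm_le_of_norm_deriv_right_le_deriv_boundary
    (fun t _ => (hφ t).continuousAt.continuousWithinAt) (fun t _ => (hφ t).hasDerivWithinAt)
    (by simp) hB bound (Set.right_mem_Icc.2 zero_le_one)
  convert this using 1
  · simp [e]
  · ring

lemma nonneg_of_norm_sub_le_mul_norm_sub {E F : Type*} [NormedAddCommGroup E] [Nontrivial E]
    [SeminormedAddCommGroup F] {φ : E → F} {K : ℝ} (h : ∀ x y, ‖φ x - φ y‖ ≤ K * ‖x - y‖) :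
    0 ≤ K := by
  obtain ⟨x, hx⟩ := exists_ne (0 : E)
  have := (norm_nonneg _).trans (h x 0)
  rw [sub_zero] at this
  exact nonneg_of_mul_nonneg_left this (norm_pos_iff.2 hx)

lemma mul_norm_le_norm_apply_of_le_inner {E : Type*} [NormedAddCommGroup E]
    [InnerProductSpace ℝ E] {T : E →L[ℝ] E} {μ : ℝ} (hT : ∀ v, μ * ‖v‖ ^ 2 ≤ ⟪T v, v⟫) (v : E) :
    μ * ‖v‖ ≤ ‖T v‖ := by
  rcases eq_or_ne v 0 with rfl | hv
  · simp
  refine le_of_mul_le_mul_right ?_ (norm_pos_iff.2 hv)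
  calc μ * ‖v‖ * ‖v‖ = μ * ‖v‖ ^ 2 := by ring
    _ ≤ ⟪T v, v⟫ := hT v
    _ ≤ ‖T v‖ * ‖v‖ := real_inner_le_norm _ _

lemma mul_norm_sub_le_of_newton_step {E : Type*} [NormedAddCommGroup E] [InnerProductSpace ℝ E]
    {T : E →L[ℝ] E} {μ : ℝ} (hT : ∀ v, μ * ‖v‖ ^ 2 ≤ ⟪T v, v⟫) (B : E →L[ℝ] E) {g : E → E}
    {x x' xs : E} (hstep : T (x' - x) = -g x) (hxs : g xs = 0) :
    μ * ‖x' - xs‖ ≤ ‖T (x - xs) - B (x - xs)‖ + ‖g x - g xs - B (x - xs)‖ := by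
  have hsplit : T (x' - xs) = (T (x - xs) - B (x - xs)) - (g x - g xs - B (x - xs)) := by
    rw [show x' - xs = (x' - x) + (x - xs) by abel, map_add, hstep, hxs]
    abel
  calc μ * ‖x' - xs‖ ≤ ‖T (x' - xs)‖ := mul_norm_le_norm_apply_of_le_inner hT _
    _ ≤ _ := hsplit ▸ norm_sub_le _ _

/-- Cauchy–Schwarz with weights `(1/5, 2/5, 1/5, 1/5)`. -/
lemma sq_add_add_add_le (a b c d : ℝ) :
    (a + b + c + d) ^ 2 ≤ 5 * a ^ 2 + 5 / 2 * b ^ 2 + 5 * c ^ 2 + 5 * d ^ 2 := by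
  nlinarith [sq_nonneg (2 * a - b), sq_nonneg (2 * c - b), sq_nonneg (2 * d - b),
    sq_nonneg (a - c), sq_nonneg (a - d), sq_nonneg (c - d)]

lemma sq_le_of_mul_le_newton_bound {μ N N' s s₂ H L : ℝ} (hμ : 0 < μ) (hN' : 0 ≤ N')
    (h : μ * N' ≤ (2 * (s + L * N) + H / 2 * (N' + N)) * N + H / 2 * N ^ 2)
    (hs : s ^ 2 ≤ s₂) :
    N' ^ 2 ≤ 5 * H ^ 2 / (4 * μ ^ 2) * (N' ^ 2 * N ^ 2) + 20 / μ ^ 2 * N ^ 2 * s₂ +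
      5 * (H ^ 2 + 8 * L ^ 2) / (2 * μ ^ 2) * N ^ 4 := by
  have hsq : (μ * N') ^ 2 ≤ (H / 2 * N' * N + H * N ^ 2 + 2 * L * N ^ 2 + 2 * s * N) ^ 2 :=
    pow_le_pow_left₀ (by positivity) (by linarith) 2
  have hcs := sq_add_add_add_le (H / 2 * N' * N) (H * N ^ 2) (2 * L * N ^ 2) (2 * s * N)
  have hsN : s ^ 2 * N ^ 2 ≤ s₂ * N ^ 2 := by gcongr
  have key : μ ^ 2 * N' ^ 2 ≤ 5 * H ^ 2 / 4 * (N' ^ 2 * N ^ 2) + 20 * N ^ 2 * s₂ +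
      5 * (H ^ 2 + 8 * L ^ 2) / 2 * N ^ 4 := by
    linear_combination hsq + hcs + 20 * hsN
  calc N' ^ 2 = μ ^ 2 * N' ^ 2 / μ ^ 2 := by field_simp
    _ ≤ (5 * H ^ 2 / 4 * (N' ^ 2 * N ^ 2) + 20 * N ^ 2 * s₂ +
      5 * (H ^ 2 + 8 * L ^ 2) / 2 * N ^ 4) / μ ^ 2 := by gcongr
    _ = _ := by field_simp

theorem fednl_cr_one_step_general {d n : ℕ} (hn : 0 < n)
    (g : EuclideanSpace ℝ (Fin d) → EuclideanSpace ℝ (Fin d))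
    (Hess : Fin n → EuclideanSpace ℝ (Fin d) → Matrix (Fin d) (Fin d) ℝ)
    (Hs LF μ : ℝ) (hμ : 0 < μ) (xstar : EuclideanSpace ℝ (Fin d))
    -- the Hessian of `f` is the average of the local Hessians
    (hHess : ∀ x, HasFDerivAt g (Matrix.toCLM' ((n : ℝ)⁻¹ • ∑ i, Hess i x)) x)
    -- `μ`-strong convexity of `f`: `μI ⪯ ∇²f(x)`
    (hsc : ∀ x v, μ * ‖v‖ ^ 2 ≤ ⟪Matrix.toCLM' ((n : ℝ)⁻¹ • ∑ i, Hess i x) v, v⟫)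
    -- the Hessian of `f` is `Hs`-Lipschitz in the spectral norm
    (hLipS : ∀ x y, ‖Matrix.toCLM' ((n : ℝ)⁻¹ • ∑ i, Hess i x) -
      Matrix.toCLM' ((n : ℝ)⁻¹ • ∑ i, Hess i y)‖ ≤ Hs * ‖x - y‖)
    -- each local Hessian is `LF`-Lipschitz in the Frobenius norm
    (hLipF : ∀ i x y, ‖Hess i x - Hess i y‖ ≤ LF * ‖x - y‖)
    (hstar : g xstar = 0)
    (Hk : Fin n → Matrix (Fin d) (Fin d) ℝ)
    (xk xnext : EuclideanSpace ℝ (Fin d))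
    -- the corrected estimate `M_k := H^k + l^k I` with `l^k = (1/n)Σᵢ ‖Hᵢ^k − ∇²fᵢ(x^k)‖_F`
    (Mk : Matrix (Fin d) (Fin d) ℝ)
    (hMk : Mk = (n : ℝ)⁻¹ • ∑ i, Hk i +
      ((n : ℝ)⁻¹ * ∑ i, ‖Hk i - Hess i xk‖) • (1 : Matrix (Fin d) (Fin d) ℝ))
    -- `∇²f(x^k) ⪯ M_k`
    (hdom : ∀ v, ⟪Matrix.toCLM' ((n : ℝ)⁻¹ • ∑ i, Hess i xk) v, v⟫ ≤
      ⟪Matrix.toCLM' Mk v, v⟫)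
    -- the implicit cubic-regularized matrix `A := M_k + (Hs/2)‖x^{k+1}−x^k‖ I`
    (A : Matrix (Fin d) (Fin d) ℝ)
    (hAdef : A = Mk + (Hs / 2 * ‖xnext - xk‖) • (1 : Matrix (Fin d) (Fin d) ℝ))
    (Ainv : EuclideanSpace ℝ (Fin d) →L[ℝ] EuclideanSpace ℝ (Fin d))
    (hinv2 : (Matrix.toCLM' A).comp Ainv = ContinuousLinearMap.id ℝ _)
    (hiter : xnext = xk - Ainv (g xk)) :
    ‖xnext - xstar‖ ^ 2 ≤
      5 * Hs ^ 2 / (4 * μ ^ 2) * (‖xnext - xstar‖ ^ 2 * ‖xk - xstar‖ ^ 2) +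
        20 / μ ^ 2 * ‖xk - xstar‖ ^ 2 *
          ((n : ℝ)⁻¹ * ∑ i, ‖Hk i - Hess i xstar‖ ^ 2) +
        5 * (Hs ^ 2 + 8 * LF ^ 2) / (2 * μ ^ 2) * ‖xk - xstar‖ ^ 4 := by
  rcases subsingleton_or_nontrivial (EuclideanSpace ℝ (Fin d)) with hE | hE
  · simp [Subsingleton.elim xnext xstar, Subsingleton.elim xk xstar]
  have hHs : 0 ≤ Hs := nonneg_of_norm_sub_le_mul_norm_sub hLipS
  have hc : 0 ≤ Hs / 2 * ‖xnext - xk‖ := by positivity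
  have hstep : Matrix.toCLM' A (xnext - xk) = -g xk := by
    rw [hiter, sub_sub_cancel_left, map_neg, ← ContinuousLinearMap.comp_apply, hinv2]
    rfl
  subst hMk hAdef
  have hcoer := Matrix.le_inner_toCLM'_add_smul_one (fun v => (hsc xk v).trans (hdom v)) hc
  have hres := (mul_norm_sub_le_of_newton_step hcoer _ hstep hstar).trans <|
    add_le_add (Matrix.norm_toCLM'_corrected_mean_sub_apply_le Hk _ hc _)
      (norm_image_sub_sub_fderiv_le_of_lipschitz hHess hLipS xstar xk)
  have hl := inv_mul_sum_norm_sub_le_of_lipschitz hn.ne' Hk hLipF xk xstar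
  have hdist : ‖xnext - xk‖ ≤ ‖xnext - xstar‖ + ‖xk - xstar‖ := by
    simpa only [dist_eq_norm] using dist_triangle_right xnext xk xstar
  refine sq_le_of_mul_le_newton_bound hμ (norm_nonneg _) (hres.trans ?_)
    (sq_inv_mul_sum_le_inv_mul_sum_sq _)
  gcongr

/-- one (implicit) cubic-regularized Newton-type step of FedNL-CR. -/
theorem fednl_cr_one_step {d n : ℕ} (hn : 0 < n)
    (f : EuclideanSpace ℝ (Fin d) → ℝ)
    (g : EuclideanSpace ℝ (Fin d) → EuclideanSpace ℝ (Fin d))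
    (Hess : Fin n → EuclideanSpace ℝ (Fin d) → Matrix (Fin d) (Fin d) ℝ)
    (Hs LF μ : ℝ) (hμ : 0 < μ) (xstar : EuclideanSpace ℝ (Fin d))
    (hgrad : ∀ x, HasGradientAt f (g x) x)
    -- the Hessian of `f` is the average of the local Hessians
    (hHess : ∀ x, HasFDerivAt g (Matrix.toCLM' ((n : ℝ)⁻¹ • ∑ i, Hess i x)) x)
    -- `μ`-strong convexity of `f`: `μI ⪯ ∇²f(x)`
    (hsc : ∀ x v, μ * ‖v‖ ^ 2 ≤ ⟪Matrix.toCLM' ((n : ℝ)⁻¹ • ∑ i, Hess i x) v, v⟫)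
    -- the Hessian of `f` is `Hs`-Lipschitz in the spectral norm
    (hLipS : ∀ x y, ‖Matrix.toCLM' ((n : ℝ)⁻¹ • ∑ i, Hess i x) -
      Matrix.toCLM' ((n : ℝ)⁻¹ • ∑ i, Hess i y)‖ ≤ Hs * ‖x - y‖)
    -- each local Hessian is `LF`-Lipschitz in the Frobenius norm
    (hLipF : ∀ i x y, ‖Hess i x - Hess i y‖ ≤ LF * ‖x - y‖)
    (hstar : g xstar = 0)
    (Hk : Fin n → Matrix (Fin d) (Fin d) ℝ)
    (xk xnext : EuclideanSpace ℝ (Fin d))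
    -- the corrected estimate `M_k := H^k + l^k I` with `l^k = (1/n)Σᵢ ‖Hᵢ^k − ∇²fᵢ(x^k)‖_F`
    (Mk : Matrix (Fin d) (Fin d) ℝ)
    (hMk : Mk = (n : ℝ)⁻¹ • ∑ i, Hk i +
      ((n : ℝ)⁻¹ * ∑ i, ‖Hk i - Hess i xk‖) • (1 : Matrix (Fin d) (Fin d) ℝ))
    -- `∇²f(x^k) ⪯ M_k`
    (hdom : ∀ v, ⟪Matrix.toCLM' ((n : ℝ)⁻¹ • ∑ i, Hess i xk) v, v⟫ ≤
      ⟪Matrix.toCLM' Mk v, v⟫)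
    -- the implicit cubic-regularized matrix `A := M_k + (Hs/2)‖x^{k+1}−x^k‖ I`
    (A : Matrix (Fin d) (Fin d) ℝ)
    (hAdef : A = Mk + (Hs / 2 * ‖xnext - xk‖) • (1 : Matrix (Fin d) (Fin d) ℝ))
    (Ainv : EuclideanSpace ℝ (Fin d) →L[ℝ] EuclideanSpace ℝ (Fin d))
    (hinv1 : Ainv.comp (Matrix.toCLM' A) = ContinuousLinearMap.id ℝ _)
    (hinv2 : (Matrix.toCLM' A).comp Ainv = ContinuousLinearMap.id ℝ _)
    (hiter : xnext = xk - Ainv (g xk)) :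
    ‖xnext - xstar‖ ^ 2 ≤
      5 * Hs ^ 2 / (4 * μ ^ 2) * (‖xnext - xstar‖ ^ 2 * ‖xk - xstar‖ ^ 2) +
        20 / μ ^ 2 * ‖xk - xstar‖ ^ 2 *
          ((n : ℝ)⁻¹ * ∑ i, ‖Hk i - Hess i xstar‖ ^ 2) +
        5 * (Hs ^ 2 + 8 * LF ^ 2) / (2 * μ ^ 2) * ‖xk - xstar‖ ^ 4 :=
  fednl_cr_one_step_general hn g Hess Hs LF μ hμ xstar hHess hsc hLipS hLipF hstar Hk xk xnext Mk
    hMk hdom A hAdef Ainv hinv2 hiter
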